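/- arXiv:1609.01009 — 2 statements merged into one kernel-verified Lean document; each statement's English description precedes it below -/
import Mathlib

section
/- There exists β > 0 with the following property: for every open ‖·‖_∞-ball B centered at 0 in Mat_{m×n}(K) there is a constant b > 0 (depending on B but not on v) such that for each r = 1,…,d−1, every v ∈ ⋀^r K^d and every a ∈ 𝔞⁺, one has sup_{A ∈ B} ‖σ(g_a u_A) v‖_∞ ≥ b · q^{β·min(a)} · ‖v‖_∞, where σ: G → GL(⋀^r K^d) is the r-th exterior power representation. -/
set_option linter.unusedSectionVars false
set_option synthInstance.maxHeartbeats 1000000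
set_option maxHeartbeats 1000000
set_option linter.unusedTactic false

open MeasureTheory Matrix Filter Topology

noncomputable section

namespace PaperKL

variable (Fq : Type) [Field Fq] [Fintype Fq]

/-- The local field `K = 𝔽_q((t⁻¹))`, realized as the field of formal Laurent series
in the variable `X = t⁻¹` over `𝔽_q`. -/
abbrev KK (Fq : Type) [Field Fq] : Type := LaurentSeries Fq

/-- The element `t` (the inverse of the Laurent-series variable `X = t⁻¹`). -/
def tElem : KK Fq := HahnSeries.single (-1 : ℤ) 1

/-- The ring `Z = 𝔽_q[t]` of polynomials in `t`, as a subalgebra of `K`. -/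
def Zring : Subalgebra Fq (KK Fq) := Algebra.adjoin Fq {tElem Fq}

/-- The ring `𝒪 = 𝔽_q[[t⁻¹]]` of formal power series in `t⁻¹`, as a subset of `K`. -/
def Oring : Set (KK Fq) := {f | ∀ i : ℤ, i < 0 → f.coeff i = 0}

/-- The absolute value `|f| = q^{deg f}` on `K` (`deg` of a Laurent series in `t⁻¹`
is minus its order in `X = t⁻¹`). -/
def absK (f : KK Fq) : ℝ :=
  @ite _ (f = 0) (Classical.dec _) 0 ((Fintype.card Fq : ℝ) ^ (-f.order))

/-- Supremum norm on `K^d`. -/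
def normInf {d : ℕ} (x : Fin d → KK Fq) : ℝ := ⨆ i, absK Fq (x i)

/-- Supremum norm on matrices over `K`. -/
def normInfMat {m n : ℕ} (A : Fin m → Fin n → KK Fq) : ℝ := ⨆ i, ⨆ j, absK Fq (A i j)

/-- Weighted quasi-norm `‖x‖ = max_i |x_i|^{1/w i}`. -/
def normWt {k : ℕ} (w : Fin k → ℕ) (x : Fin k → KK Fq) : ℝ :=
  ⨆ i, (absK Fq (x i)) ^ ((w i : ℝ)⁻¹)

/-- The weighted quasi-norm `‖·‖_α` on `K^m` given by the first `m` weights. -/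
def normAlpha {m n : ℕ} (a : Fin (m + n) → ℕ) (x : Fin m → KK Fq) : ℝ :=
  normWt Fq (fun i => a (Fin.castAdd n i)) x

/-- The weighted quasi-norm `‖·‖_β` on `K^n` given by the last `n` weights. -/
def normBeta {m n : ℕ} (a : Fin (m + n) → ℕ) (y : Fin n → KK Fq) : ℝ :=
  normWt Fq (fun j => a (Fin.natAdd m j)) y

/-- `G = SL(d, K)`. -/
abbrev G (d : ℕ) : Type := Matrix.SpecialLinearGroup (Fin d) (KK Fq)

/-- `Γ = SL(d, Z)`, the subgroup of `G` of matrices with entries in `Z = 𝔽_q[t]`. -/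
def Gamma (d : ℕ) : Subgroup (G Fq d) :=
  (Matrix.SpecialLinearGroup.map (n := Fin d) (Zring Fq).toSubring.subtype).range

instance (d : ℕ) : TopologicalSpace (G Fq d) :=
  TopologicalSpace.induced (fun g => (g : Matrix (Fin d) (Fin d) (KK Fq))) inferInstance

instance : MeasurableSpace (KK Fq) := borel _

instance : BorelSpace (KK Fq) := ⟨rfl⟩

instance (d : ℕ) : MeasurableSpace (G Fq d) := borel _

/-- The homogeneous space `X = G/Γ`. -/
abbrev XSpace (d : ℕ) : Type := G Fq d ⧸ Gamma Fq d

lemma prod_zpow_eq {ι : Type*} (x : KK Fq) (hx : x ≠ 0) (s : Finset ι) (f : ι → ℤ) :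
    ∏ i ∈ s, x ^ f i = x ^ ∑ i ∈ s, f i := by
  classical
  induction s using Finset.induction with
  | empty => simp
  | insert a s h ih => rw [Finset.prod_insert h, Finset.sum_insert h, ih, zpow_add₀ hx]

lemma tElem_ne_zero : tElem Fq ≠ 0 := HahnSeries.single_ne_zero one_ne_zero

/-- The weight vector of the diagonal element `g_a`. -/
def wtVec (m n : ℕ) (a : Fin (m + n) → ℕ) : Fin (m + n) → ℤ :=
  Fin.addCases (fun i => (a (Fin.castAdd n i) : ℤ)) (fun j => -(a (Fin.natAdd m j) : ℤ))

/-- The diagonal element `g_a = diag(t^{a₁},…,t^{a_m},t^{−a_{m+1}},…,t^{−a_{m+n}}) ∈ SL(d,K)`. -/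
def ga {m n : ℕ} (a : Fin (m + n) → ℕ)
    (hsum : ∑ i : Fin m, a (Fin.castAdd n i) = ∑ j : Fin n, a (Fin.natAdd m j)) :
    G Fq (m + n) :=
  ⟨Matrix.diagonal (fun i => tElem Fq ^ wtVec m n a i), by
    rw [Matrix.det_diagonal, prod_zpow_eq Fq _ (tElem_ne_zero Fq)]
    have : ∑ i : Fin (m + n), wtVec m n a i = 0 := by
      rw [Fin.sum_univ_add]
      simp only [wtVec, Fin.addCases_left, Fin.addCases_right]
      rw [Finset.sum_neg_distrib]
      push_cast
      rw [← Nat.cast_sum, ← Nat.cast_sum, hsum]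
      ring
    rw [this, zpow_zero]⟩

/-- The unipotent element `u_A = [[I, A], [0, I]] ∈ SL(m+n, K)`. -/
def uA {m n : ℕ} (A : Fin m → Fin n → KK Fq) : G Fq (m + n) :=
  ⟨(Matrix.fromBlocks 1 (Matrix.of A) 0 1).submatrix finSumFinEquiv.symm finSumFinEquiv.symm, by
    rw [Matrix.det_submatrix_equiv_self, Matrix.det_fromBlocks_zero₂₁]; simp⟩

/-- `min a = min_i a_i`. -/
def minWt {k : ℕ} (a : Fin k → ℕ) : ℕ := ⨅ i, a i

/-- The product measure `λ^{mn}` on `Mat_{m×n}(K)`. -/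
def lamMat (m n : ℕ) (lam : Measure (KK Fq)) : Measure (Fin m → Fin n → KK Fq) :=
  Measure.pi fun _ => Measure.pi fun _ => lam

/-- The product measure `λ^d` on `K^d`. -/
def lamVec (d : ℕ) (lam : Measure (KK Fq)) : Measure (Fin d → KK Fq) :=
  Measure.pi fun _ => lam

/-- `C_c^∞(X)`: compactly supported functions on `X = G/Γ` whose lift to `G` is smooth,
i.e. right-invariant under some compact open subgroup of `G`. -/
def IsSmoothCc (d : ℕ) (φ : XSpace Fq d → ℝ) : Prop :=
  HasCompactSupport φ ∧
    ∃ U : Subgroup (G Fq d), IsOpen (U : Set (G Fq d)) ∧ IsCompact (U : Set (G Fq d)) ∧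
      ∀ g u : G Fq d, u ∈ U → φ (QuotientGroup.mk (g * u)) = φ (QuotientGroup.mk g)

/-- `C_c^∞(H)`, in the coordinates `H ≃ Mat_{m×n}(K)`: compactly supported smooth
(locally constant) functions. -/
def IsSmoothCcH (m n : ℕ) (f : (Fin m → Fin n → KK Fq) → ℝ) : Prop :=
  HasCompactSupport f ∧
    ∃ U : AddSubgroup (Fin m → Fin n → KK Fq),
      IsOpen (U : Set (Fin m → Fin n → KK Fq)) ∧
      IsCompact (U : Set (Fin m → Fin n → KK Fq)) ∧
      ∀ A B, B ∈ U → f (A + B) = f A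

/-- The lattice `g·Z^d ⊆ K^d` attached to `g`. -/
def latticeOf {d : ℕ} (g : Matrix (Fin d) (Fin d) (KK Fq)) : Set (Fin d → KK Fq) :=
  {v | ∃ w : Fin d → KK Fq, (∀ i, w i ∈ Zring Fq) ∧ v = g.mulVec w}

/-- `δ(g·Z^d)`: the length of the shortest nonzero vector of the lattice `g·Z^d`. -/
def deltaOf {d : ℕ} (g : Matrix (Fin d) (Fin d) (KK Fq)) : ℝ :=
  sInf {c | ∃ v ∈ latticeOf Fq g, v ≠ 0 ∧ c = normInf Fq v}

/-- `‖w₁ ∧ ⋯ ∧ w_r‖_∞`: the supremum norm of the coordinates of the wedge of `r` vectors in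
the standard basis of `⋀^r K^d`, i.e. the sup of the absolute values of the `r×r` minors. -/
def wedgeNorm {d r : ℕ} (w : Fin r → Fin d → KK Fq) : ℝ :=
  ⨆ I : {s : Finset (Fin d) // s.card = r},
    absK Fq (Matrix.det (Matrix.of fun i j : Fin r => w j ((I.1.orderIsoOfFin I.2 i : Fin d))))

/-- `α(g·Z^d)`: the supremum of `vol(KΔ/Δ)⁻¹` over `Z`-submodules `Δ` of the lattice `g·Z^d`,
where the covolume of a rank-`r` submodule with `Z`-basis `w₁,…,w_r` is `‖w₁ ∧ ⋯ ∧ w_r‖_∞`. -/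
def alphaOf {d : ℕ} (g : Matrix (Fin d) (Fin d) (KK Fq)) : ℝ :=
  sSup {c | ∃ r : ℕ, r ≤ d ∧ ∃ w : Fin r → Fin d → KK Fq,
    (∀ j, w j ∈ latticeOf Fq g) ∧ LinearIndependent (KK Fq) w ∧ c = (wedgeNorm Fq w)⁻¹}

/-- The congruence subgroup `K^{(l)} = (Id + t^{-l} Mat(d,𝒪)) ∩ SL(d,𝒪)` (for `l = 0`
this is `K₀ = SL(d,𝒪)`), as a subset of `G`. -/
def congSet (d l : ℕ) : Set (G Fq d) :=
  {g | ∀ i j : Fin d, ∀ s : ℤ, s < l →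
    ((g : Matrix (Fin d) (Fin d) (KK Fq)) i j
      - (1 : Matrix (Fin d) (Fin d) (KK Fq)) i j).coeff s = 0}

/-- The averaging operator `Av_l` over `K^{(l)}`, where `η l` is the probability Haar
measure on `K^{(l)}`. -/
def avgX {d : ℕ} (η : ℕ → Measure (G Fq d)) (l : ℕ) (φ : XSpace Fq d → ℝ) :
    XSpace Fq d → ℝ := fun x => ∫ k, φ (k • x) ∂(η l)

/-- The level-`l` projection `pr[l]`. -/
def prX {d : ℕ} (η : ℕ → Measure (G Fq d)) : ℕ → (XSpace Fq d → ℝ) → XSpace Fq d → ℝ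
  | 0 => fun φ => avgX Fq η 0 φ
  | (l + 1) => fun φ => avgX Fq η (l + 1) φ - avgX Fq η l φ

/-- The degree-`k` Sobolev norm `S_k(φ)` on `X`: `S_k(φ)² = Σ_{l≥0} q^{lk}‖pr[l]φ‖₂²`. -/
def sobolevX {d : ℕ} (η : ℕ → Measure (G Fq d)) (mu : Measure (XSpace Fq d)) (k : ℕ)
    (φ : XSpace Fq d → ℝ) : ℝ :=
  Real.sqrt (∑' l : ℕ, (Fintype.card Fq : ℝ) ^ (l * k) * ∫ x, (prX Fq η l φ x) ^ 2 ∂mu)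

/-- The family `η` is the family of probability Haar measures on the congruence
subgroups `K^{(l)}` of `G`. -/
def IsHaarFamily (d : ℕ) (η : ℕ → Measure (G Fq d)) : Prop :=
  ∀ l : ℕ, IsProbabilityMeasure (η l) ∧ η l (congSet Fq d l)ᶜ = 0 ∧
    ∀ k ∈ congSet Fq d l, Measure.map (fun g => k * g) (η l) = η l

/-- `K^{(l)} ∩ H` in the coordinates of `H`: matrices with entries in `t^{-l}𝒪`. -/
def congSetH (m n : ℕ) (l : ℕ) : Set (Fin m → Fin n → KK Fq) :=
  {A | ∀ i j, ∀ s : ℤ, s < l → (A i j).coeff s = 0}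

/-- The probability Haar measure on `K^{(l)} ∩ H`: the normalized restriction of `λ^{mn}`. -/
def haarCongH (m n : ℕ) (lam : Measure (KK Fq)) (l : ℕ) : Measure (Fin m → Fin n → KK Fq) :=
  (lamMat Fq m n lam (congSetH Fq m n l))⁻¹ • (lamMat Fq m n lam).restrict (congSetH Fq m n l)

/-- The averaging operator `Av_l` over `K^{(l)} ∩ H` on functions on `H`. -/
def avgH {m n : ℕ} (lam : Measure (KK Fq)) (l : ℕ) (f : (Fin m → Fin n → KK Fq) → ℝ) :
    (Fin m → Fin n → KK Fq) → ℝ := fun A => ∫ B, f (A + B) ∂(haarCongH Fq m n lam l)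

/-- The level-`l` projection `pr[l]` on functions on `H`. -/
def prH {m n : ℕ} (lam : Measure (KK Fq)) :
    ℕ → ((Fin m → Fin n → KK Fq) → ℝ) → (Fin m → Fin n → KK Fq) → ℝ
  | 0 => fun f => avgH Fq lam 0 f
  | (l + 1) => fun f => avgH Fq lam (l + 1) f - avgH Fq lam l f

/-- The degree-`k` Sobolev norm on `C_c^∞(H)`. -/
def sobolevH {m n : ℕ} (lam : Measure (KK Fq)) (k : ℕ)
    (f : (Fin m → Fin n → KK Fq) → ℝ) : ℝ :=
  Real.sqrt (∑' l : ℕ, (Fintype.card Fq : ℝ) ^ (l * k) *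
    ∫ A, (prH Fq lam l f A) ^ 2 ∂(lamMat Fq m n lam))

/-- Splitting of a vector of `K^{m+n}` into its first `m` and last `n` coordinates. -/
def vSplit {m n : ℕ} (v : Fin (m + n) → KK Fq) : (Fin m → KK Fq) × (Fin n → KK Fq) :=
  (fun i => v (Fin.castAdd n i), fun j => v (Fin.natAdd m j))

/-- `π_α(x) ∈ C`: some point of the weighted dilation orbit
`{(t^{k a₁}x₁,…,t^{k a_m}x_m) : k ∈ ℤ}` of `x` lies in `C` (`C` a subset of the unit
sphere `S^{m-1}`). -/
def dirMemA {m n : ℕ} (a : Fin (m + n) → ℕ) (C : Set (Fin m → KK Fq))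
    (x : Fin m → KK Fq) : Prop :=
  ∃ k : ℤ, (fun i => tElem Fq ^ (k * (a (Fin.castAdd n i) : ℤ)) * x i) ∈ C

/-- `π_β(y) ∈ C` for the weights `a_{m+1},…,a_{m+n}`. -/
def dirMemB {m n : ℕ} (a : Fin (m + n) → ℕ) (C : Set (Fin n → KK Fq))
    (y : Fin n → KK Fq) : Prop :=
  ∃ k : ℤ, (fun j => tElem Fq ^ (k * (a (Fin.natAdd m j) : ℤ)) * y j) ∈ C

/-- The set `E_{T,R} = {(x,y) : ‖x‖_α < q^R/‖y‖_β, 1 ≤ ‖y‖_β ≤ q^T}`. -/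
def ESet {m n : ℕ} (a : Fin (m + n) → ℕ) (T R : ℝ) :
    Set ((Fin m → KK Fq) × (Fin n → KK Fq)) :=
  {p | normAlpha Fq a p.1 < (Fintype.card Fq : ℝ) ^ R / normBeta Fq a p.2 ∧
       1 ≤ normBeta Fq a p.2 ∧ normBeta Fq a p.2 ≤ (Fintype.card Fq : ℝ) ^ T}

/-- The set `F_{S,R} = {(x,y) : ‖x‖_α < q^R/‖y‖_β, 1 ≤ ‖x‖_α ≤ q^S}`. -/
def FSet {m n : ℕ} (a : Fin (m + n) → ℕ) (S R : ℝ) :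
    Set ((Fin m → KK Fq) × (Fin n → KK Fq)) :=
  {p | normAlpha Fq a p.1 < (Fintype.card Fq : ℝ) ^ R / normBeta Fq a p.2 ∧
       1 ≤ normAlpha Fq a p.1 ∧ normAlpha Fq a p.1 ≤ (Fintype.card Fq : ℝ) ^ S}

/-- The set `E_{T,R}(C₁,C₂)`: points of `E_{T,R}` with directions in `C₁`, `C₂`. -/
def ESetDir {m n : ℕ} (a : Fin (m + n) → ℕ) (T R : ℝ)
    (C₁ : Set (Fin m → KK Fq)) (C₂ : Set (Fin n → KK Fq)) :
    Set ((Fin m → KK Fq) × (Fin n → KK Fq)) :=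
  {p | p ∈ ESet Fq a T R ∧ dirMemA Fq a C₁ p.1 ∧ dirMemB Fq a C₂ p.2}

/-- `N_R(T,A)`: the number of nonzero `(p,q) ∈ Z^m × Z^n` with
`‖Aq − p‖_α < q^R/‖q‖_β` and `1 ≤ ‖q‖_β ≤ q^T`. -/
def countSol {m n : ℕ} (a : Fin (m + n) → ℕ) (T R : ℝ) (A : Fin m → Fin n → KK Fq) : ℕ :=
  Nat.card {pq : (Fin m → KK Fq) × (Fin n → KK Fq) //
    pq ≠ 0 ∧ (∀ i, pq.1 i ∈ Zring Fq) ∧ (∀ j, pq.2 j ∈ Zring Fq) ∧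
    ((Matrix.of A).mulVec pq.2 - pq.1, pq.2) ∈ ESet Fq a T R}

/-- `N_R(T,A)(C₁,C₂)`: as `countSol`, with the direction constraints
`π_α(Aq−p) ∈ C₁`, `π_β(q) ∈ C₂`. -/
def countSolDir {m n : ℕ} (a : Fin (m + n) → ℕ) (T R : ℝ)
    (C₁ : Set (Fin m → KK Fq)) (C₂ : Set (Fin n → KK Fq)) (A : Fin m → Fin n → KK Fq) : ℕ :=
  Nat.card {pq : (Fin m → KK Fq) × (Fin n → KK Fq) //
    pq ≠ 0 ∧ (∀ i, pq.1 i ∈ Zring Fq) ∧ (∀ j, pq.2 j ∈ Zring Fq) ∧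
    ((Matrix.of A).mulVec pq.2 - pq.1, pq.2) ∈ ESetDir Fq a T R C₁ C₂}

/-- The Siegel transform `f̂(Λ) = Σ_{v ∈ Λ∖{0}} f(v)` of the characteristic function of a
set `S ⊆ K^d`, evaluated at the lattice `g·Z^d`. -/
def siegel {d : ℕ} (S : Set (Fin d → KK Fq)) (g : Matrix (Fin d) (Fin d) (KK Fq)) : ℕ :=
  Nat.card {v : Fin d → KK Fq // v ∈ latticeOf Fq g ∧ v ≠ 0 ∧ v ∈ S}

/-- The ball of radius `ρ` centered at the origin in `(K^d, ‖·‖_∞)`. -/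
def ballVec (d : ℕ) (ρ : ℝ) : Set (Fin d → KK Fq) := {v | normInf Fq v < ρ}

/-- The ball of radius `ρ` centered at `0` in `(Mat_{m×n}(K), ‖·‖_∞)`
(equivalently, the ball centered at the identity in `H`). -/
def ballMat (m n : ℕ) (ρ : ℝ) : Set (Fin m → Fin n → KK Fq) := {A | normInfMat Fq A < ρ}

/-- The ball of radius `ρ` centered at the identity in `G`, for the metric induced by the
supremum norm on matrix entries. -/
def ballG (d : ℕ) (ρ : ℝ) : Set (G Fq d) :=
  {g | normInfMat Fq (fun i j => (g : Matrix (Fin d) (Fin d) (KK Fq)) i j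
        - (1 : Matrix (Fin d) (Fin d) (KK Fq)) i j) < ρ}


/-- The matrix of the `r`-th exterior power representation `σ : G → GL(⋀^r K^d)`
in the standard basis `{e_{i₁}∧⋯∧e_{i_r} : i₁<⋯<i_r}` (indexed by `r`-element subsets
of `Fin d`): the `r`-th compound matrix, whose entries are the `r×r` minors. -/
def compound {d : ℕ} (g : Matrix (Fin d) (Fin d) (KK Fq)) (r : ℕ) :
    Matrix {s : Finset (Fin d) // s.card = r} {s : Finset (Fin d) // s.card = r} (KK Fq) :=
  Matrix.of fun I J => Matrix.det (Matrix.of fun i j : Fin r =>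
    g ((I.1.orderIsoOfFin I.2 i : Fin d)) ((J.1.orderIsoOfFin J.2 j : Fin d)))

/-- The supremum norm on `⋀^r K^d` in the standard-basis coordinates. -/
def extNorm {d r : ℕ} (v : {s : Finset (Fin d) // s.card = r} → KK Fq) : ℝ :=
  ⨆ I, absK Fq (v I)

/-!
Take `β = 1`, and for the ball of radius `ρ` fix `u = t^{-k}` with `|u| < ρ`. Given `v`, let `J`
index a coordinate of maximal size. Choose an `r`-set `I` that contains the first-block part of
`J`, whose second-block part lies in `J`, and whose `g_a`-weight `∑_{i ∈ I} wt(i)` is at least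
`min a`; this is possible because the weights of the two blocks balance. Let `τ` map `J \ I`
(second block) bijectively onto `I \ J` (first block), and for `T ⊆ J \ I` let `A_T` have the
entry `u` at the positions `(τ y, y)`, `y ∈ T`. The `I`-th minor of `u_{A_T}` against `K` is
`u^{|K ∩ (J \ I)|}` times a fixed minor if `K ∩ (J \ I) ⊆ T`, and `0` otherwise, so the
alternating sum over `T` of the `I`-coordinates of `σ(u_{A_T}) v` equals `± u^{|J \ I|} v_J`.
By the ultrametric inequality some `T` has `|σ(g_a u_{A_T}) v|_I ≥ q^{min a} |u|^d ‖v‖_∞`.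
-/

open Finset

lemma one_lt_card_real : (1 : ℝ) < Fintype.card Fq := by
  exact_mod_cast Fintype.one_lt_card

lemma absK_of_ne_zero {x : KK Fq} (hx : x ≠ 0) :
    absK Fq x = (Fintype.card Fq : ℝ) ^ (-x.order) :=
  if_neg hx

lemma absK_nonneg (x : KK Fq) : 0 ≤ absK Fq x := by
  unfold absK
  split_ifs
  exacts [le_rfl, zpow_nonneg (Nat.cast_nonneg _) _]

lemma absK_mul (x y : KK Fq) : absK Fq (x * y) = absK Fq x * absK Fq y := by
  rcases eq_or_ne x 0 with rfl | hx
  · simp [absK]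
  rcases eq_or_ne y 0 with rfl | hy
  · simp [absK]
  rw [absK_of_ne_zero Fq hx, absK_of_ne_zero Fq hy, absK_of_ne_zero Fq (mul_ne_zero hx hy),
    HahnSeries.order_mul hx hy, neg_add, zpow_add₀ (by positivity)]

lemma isNonarchimedean_absK : IsNonarchimedean (absK Fq) := by
  intro x y
  rcases eq_or_ne x 0 with rfl | hx
  · simp
  rcases eq_or_ne y 0 with rfl | hy
  · simp
  rcases eq_or_ne (x + y) 0 with hxy | hxy
  · simpa [hxy, absK] using le_max_of_le_left (absK_nonneg Fq x)
  have hmono : Monotone fun k : ℤ => (Fintype.card Fq : ℝ) ^ k :=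
    fun _ _ h => zpow_le_zpow_right₀ (one_lt_card_real Fq).le h
  rw [absK_of_ne_zero Fq hx, absK_of_ne_zero Fq hy, absK_of_ne_zero Fq hxy, ← hmono.map_max]
  exact hmono (by simpa [neg_le, max_comm] using HahnSeries.min_order_le_order_add hxy)

def absKHom : KK Fq →*₀ ℝ where
  toFun := absK Fq
  map_zero' := if_pos rfl
  map_one' := by rw [absK_of_ne_zero Fq one_ne_zero, HahnSeries.order_one, neg_zero, zpow_zero]
  map_mul' := absK_mul Fq

lemma absK_zero : absK Fq 0 = 0 := map_zero (absKHom Fq)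

lemma absK_one : absK Fq 1 = 1 := map_one (absKHom Fq)

lemma absK_pow (x : KK Fq) (k : ℕ) : absK Fq (x ^ k) = absK Fq x ^ k := map_pow (absKHom Fq) x k

lemma absK_zpow (x : KK Fq) (k : ℤ) : absK Fq (x ^ k) = absK Fq x ^ k :=
  map_zpow₀ (absKHom Fq) x k

lemma absK_neg_one : absK Fq (-1) = 1 := by
  rw [absK_of_ne_zero Fq (by simp), HahnSeries.order_neg, HahnSeries.order_one, neg_zero,
    zpow_zero]

lemma absK_tElem : absK Fq (tElem Fq) = Fintype.card Fq := by
  rw [absK_of_ne_zero Fq (tElem_ne_zero Fq), tElem, HahnSeries.order_single one_ne_zero, neg_neg,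
    zpow_one]

section WeightedSubset

variable {α : Type*} [Fintype α] [DecidableEq α]

lemma exists_card_eq_weight_ge (F : Finset α) (a : α → ℕ) (μ : ℕ) (hμ : ∀ i, μ ≤ a i)
    (hbal : ∑ i ∈ F, a i = ∑ i ∈ Fᶜ, a i) (J : Finset α) (hJ0 : 0 < J.card)
    (hJ : J.card < Fintype.card α) :
    ∃ I : Finset α, I.card = J.card ∧ J ∩ F ⊆ I ∧ I \ F ⊆ J ∧
      μ + ∑ i ∈ I \ F, a i ≤ ∑ i ∈ I ∩ F, a i := by
  have hsum_ge (s : Finset α) (hs : 0 < s.card) : μ ≤ ∑ i ∈ s, a i :=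
    calc μ ≤ s.card • μ := Nat.le_mul_of_pos_left μ hs
      _ ≤ ∑ i ∈ s, a i := card_nsmul_le_sum s a μ fun i _ => hμ i
  by_cases hJF : J.card ≤ F.card
  · obtain ⟨I, hJI, hIF, hI⟩ := exists_subsuperset_card_eq inter_subset_right
      (card_le_card inter_subset_left) hJF
    refine ⟨I, hI, hJI, by simp [sdiff_eq_empty_iff_subset.2 hIF], ?_⟩
    rw [sdiff_eq_empty_iff_subset.2 hIF, inter_eq_left.2 hIF, sum_empty,
      add_zero]
    exact hsum_ge I (hI ▸ hJ0)
  · -- `I` is all of `F` together with enough of `J \ F`; the balance condition turns its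
    -- weight into the weight of the nonempty set `Fᶜ \ I₂`.
    replace hJF := not_le.1 hJF
    obtain ⟨I₂, hI₂J, hI₂⟩ := exists_subset_card_eq (le_card_sdiff F J)
    have hI₂F : I₂ ⊆ Fᶜ := fun x hx => mem_compl.2 (Finset.mem_sdiff.1 (hI₂J hx)).2
    have hdisj : Disjoint F I₂ := disjoint_of_subset_right hI₂F disjoint_compl_right
    refine ⟨F ∪ I₂, ?_, fun x hx => mem_union_left _ (mem_inter.1 hx).2, ?_, ?_⟩
    · rw [card_union_of_disjoint hdisj, hI₂]
      omega
    · rw [union_sdiff_left, hdisj.sdiff_eq_right]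
      exact fun x hx => (Finset.mem_sdiff.1 (hI₂J hx)).1
    · rw [union_sdiff_left, hdisj.sdiff_eq_right, union_inter_cancel_left, hbal,
        ← sum_sdiff hI₂F]
      refine Nat.add_le_add_right (hsum_ge _ ?_) _
      rw [card_sdiff_of_subset hI₂F, card_compl, hI₂]
      omega

end WeightedSubset

section AlternatingSum

variable {α : Type*} [DecidableEq α]

lemma sum_powerset_neg_one_pow_card_of_subset {R : Type*} [CommRing R] {P S : Finset α}
    (hPS : P ⊆ S) :
    ∑ T ∈ S.powerset with P ⊆ T, (-1 : R) ^ T.card = if P = S then (-1) ^ S.card else 0 := by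
  have himage : {T ∈ S.powerset | P ⊆ T} = (S \ P).powerset.image (P ∪ ·) := by
    ext T
    simp only [mem_filter, mem_powerset, mem_image]
    constructor
    · exact fun ⟨hTS, hPT⟩ => ⟨T \ P, sdiff_subset_sdiff hTS le_rfl,
        union_sdiff_of_subset hPT⟩
    · rintro ⟨U, hU, rfl⟩
      exact ⟨union_subset hPS (hU.trans sdiff_subset), subset_union_left⟩
  have hdisj {U : Finset α} (hU : U ∈ (S \ P).powerset) : Disjoint P U :=
    disjoint_of_subset_right (mem_powerset.1 hU) disjoint_sdiff
  rw [himage, sum_image fun U hU V hV hUV => by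
    simpa [union_sdiff_cancel_left (hdisj hU), union_sdiff_cancel_left (hdisj hV)]
      using congrArg (· \ P) hUV]
  rw [sum_congr rfl fun U hU => by rw [card_union_of_disjoint (hdisj hU), pow_add],
    ← mul_sum]
  have := congrArg (Int.cast : ℤ → R) (sum_powerset_neg_one_pow_card (x := S \ P))
  push_cast at this
  rw [this]
  by_cases h : P = S
  · simp [h]
  · have : ¬S ⊆ P := fun hSP => h (hPS.antisymm hSP)
    simp [h, sdiff_eq_empty_iff_subset, this]

end AlternatingSum

section Exchange

variable {α : Type*} [DecidableEq α] {τ : α → α} {I J : Finset α}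

lemma image_eq_of_image_sdiff (hτJ : (J \ I).image τ = I \ J) (hτ : ∀ y ∉ J \ I, τ y = y) :
    J.image τ = I := by
  rw [← sdiff_union_inter J I, image_union, hτJ,
    image_congr fun y hy => hτ y fun h => (Finset.mem_sdiff.1 h).2 (mem_inter.1 hy).2,
    image_id', inter_comm, sdiff_union_inter]

lemma eq_of_image_eq_of_sdiff_subset (hτJ : (J \ I).image τ = I \ J)
    (hτ : ∀ y ∉ J \ I, τ y = y) {K : Finset α} (hcard : K.card = I.card) (hJK : J \ I ⊆ K)
    (hKJ : J.card ≤ K.card) (hK : K.image τ = I) : K = J := by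
  have hinj : Set.InjOn τ K := card_image_iff.1 (by rw [hK, hcard])
  refine eq_of_subset_of_card_le (fun y hy => ?_) hKJ
  by_contra hyJ
  have hyfix : τ y = y := hτ y fun h => hyJ (Finset.mem_sdiff.1 h).1
  have hyI : y ∈ I \ J := Finset.mem_sdiff.2 ⟨hyfix ▸ hK ▸ mem_image_of_mem τ hy, hyJ⟩
  rw [← hτJ] at hyI
  obtain ⟨c, hc, hcy⟩ := mem_image.1 hyI
  have : c = y := hinj (hJK hc) hy (hcy.trans hyfix.symm)
  exact hyJ (this ▸ (Finset.mem_sdiff.1 hc).1)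

lemma exists_image_eq_of_card_eq {C R : Finset α} (h : C.card = R.card) :
    ∃ τ : α → α, C.image τ = R ∧ ∀ y ∉ C, τ y = y := by
  let e : C ≃ R := Fintype.equivOfCardEq (by simpa using h)
  refine ⟨fun y => if hy : y ∈ C then e ⟨y, hy⟩ else y, ?_, fun y hy => dif_neg hy⟩
  ext x
  simp only [mem_image]
  constructor
  · rintro ⟨y, hy, rfl⟩
    simp [hy]
  · intro hx
    exact ⟨e.symm ⟨x, hx⟩, (e.symm ⟨x, hx⟩).2, by simp⟩

end Exchange

section Compound

variable {d r : ℕ}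

/-- The matrix sending the basis vector `e y` to `e (τ y)`. -/
def funMatrix (τ : Fin d → Fin d) : Matrix (Fin d) (Fin d) (KK Fq) :=
  (1 : Matrix (Fin d) (Fin d) (KK Fq)).submatrix id τ

lemma prod_orderIsoOfFin {α M : Type*} [LinearOrder α] [CommMonoid M] (s : Finset α)
    (h : s.card = r) (f : α → M) :
    ∏ i : Fin r, f (s.orderIsoOfFin h i) = ∏ x ∈ s, f x := by
  rw [← prod_coe_sort s f]
  exact Fintype.prod_equiv (s.orderIsoOfFin h).toEquiv _ _ fun _ => rfl

lemma compound_diagonal_mul (w : Fin d → KK Fq) (M : Matrix (Fin d) (Fin d) (KK Fq))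
    (I K : {s : Finset (Fin d) // s.card = r}) :
    compound Fq (Matrix.diagonal w * M) r I K = (∏ x ∈ I.1, w x) * compound Fq M r I K := by
  simp only [compound, Matrix.of_apply, Matrix.diagonal_mul]
  rw [← prod_orderIsoOfFin I.1 I.2 w, ← Matrix.det_mul_column]
  rfl

lemma compound_eq_prod_mul_of_col {M M' : Matrix (Fin d) (Fin d) (KK Fq)} {c : Fin d → KK Fq}
    {I K : {s : Finset (Fin d) // s.card = r}}
    (h : ∀ x ∈ I.1, ∀ y ∈ K.1, M x y = c y * M' x y) :
    compound Fq M r I K = (∏ y ∈ K.1, c y) * compound Fq M' r I K := by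
  simp only [compound, Matrix.of_apply]
  rw [← prod_orderIsoOfFin K.1 K.2 c, ← Matrix.det_mul_row]
  exact congrArg Matrix.det <| Matrix.ext fun i j =>
    h _ (I.1.orderIsoOfFin I.2 i).2 _ (K.1.orderIsoOfFin K.2 j).2

lemma compound_funMatrix_eq_zero {τ : Fin d → Fin d}
    {I K : {s : Finset (Fin d) // s.card = r}} (h : K.1.image τ ≠ I.1) :
    compound Fq (funMatrix Fq τ) r I K = 0 := by
  change Matrix.det (Matrix.of fun i j : Fin r => (1 : Matrix (Fin d) (Fin d) (KK Fq))
    (I.1.orderIsoOfFin I.2 i) (τ (K.1.orderIsoOfFin K.2 j))) = 0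
  set eI := I.1.orderIsoOfFin I.2
  set eK := K.1.orderIsoOfFin K.2
  by_cases hsub : K.1.image τ ⊆ I.1
  · have hnotinj : ¬ Set.InjOn τ K.1 := fun hinj => h <| eq_of_subset_of_card_le hsub <| by
      rw [card_image_of_injOn hinj, I.2, K.2]
    obtain ⟨y₁, hy₁, y₂, hy₂, hτ, hne⟩ :
        ∃ y₁ ∈ K.1, ∃ y₂ ∈ K.1, τ y₁ = τ y₂ ∧ y₁ ≠ y₂ := by
      simpa [Set.InjOn] using hnotinj
    obtain ⟨j₁, hj₁⟩ := eK.surjective ⟨y₁, hy₁⟩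
    obtain ⟨j₂, hj₂⟩ := eK.surjective ⟨y₂, hy₂⟩
    refine Matrix.det_zero_of_column_eq (i := j₁) (j := j₂) (fun hj => hne ?_) fun i => ?_
    · simpa [hj, hj₂] using congrArg Subtype.val hj₁.symm
    · rw [Matrix.of_apply, Matrix.of_apply, hj₁, hj₂, hτ]
  · obtain ⟨x, hx, hxI⟩ := not_subset.1 hsub
    obtain ⟨y, hy, rfl⟩ := mem_image.1 hx
    obtain ⟨j, hj⟩ := eK.surjective ⟨y, hy⟩
    refine Matrix.det_eq_zero_of_column_eq_zero j fun i => ?_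
    rw [Matrix.of_apply, hj, Matrix.one_apply_ne]
    exact fun hi => hxI (hi ▸ (eI i).2)

lemma absK_compound_funMatrix {τ : Fin d → Fin d}
    {I K : {s : Finset (Fin d) // s.card = r}} (h : K.1.image τ = I.1) :
    absK Fq (compound Fq (funMatrix Fq τ) r I K) = 1 := by
  change absK Fq (Matrix.det (Matrix.of fun i j : Fin r => (1 : Matrix (Fin d) (Fin d) (KK Fq))
    (I.1.orderIsoOfFin I.2 i) (τ (K.1.orderIsoOfFin K.2 j)))) = 1
  set eI := I.1.orderIsoOfFin I.2
  set eK := K.1.orderIsoOfFin K.2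
  have hinj : Set.InjOn τ K.1 := card_image_iff.1 (by rw [h, I.2, K.2])
  have hmem (j : Fin r) : τ (eK j) ∈ I.1 := h ▸ mem_image_of_mem τ (eK j).2
  set f : Fin r → Fin r := fun j => eI.symm ⟨τ (eK j), hmem j⟩
  have hf (j : Fin r) : (eI (f j) : Fin d) = τ (eK j) := by simp [f]
  have hfinj : Function.Injective f := fun j₁ j₂ h₁₂ =>
    eK.injective <| Subtype.ext <| hinj (eK j₁).2 (eK j₂).2 <| by rw [← hf, ← hf, h₁₂]
  set σ := Equiv.ofBijective f (Finite.injective_iff_bijective.1 hfinj)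
  have hmat : Matrix.of (fun i j => (1 : Matrix (Fin d) (Fin d) (KK Fq)) (eI i) (τ (eK j)))
      = (1 : Matrix (Fin r) (Fin r) (KK Fq)).submatrix id σ := by
    ext i j
    simp only [Matrix.of_apply, Matrix.submatrix_apply, id, ← hf, Matrix.one_apply]
    simp [σ, eI.injective.eq_iff]
  rw [hmat, Matrix.det_permute', Matrix.det_one, mul_one]
  rcases Int.units_eq_one_or (Equiv.Perm.sign σ) with hσ | hσ
  · simpa [hσ] using absK_one Fq
  · simpa [hσ] using absK_neg_one Fq

def graphMatrix (τ : Fin d → Fin d) (T : Finset (Fin d)) (u : KK Fq) :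
    Matrix (Fin d) (Fin d) (KK Fq) :=
  Matrix.of fun x y => if y ∈ T ∧ x = τ y then u else 0

lemma compound_one_add_graphMatrix {τ : Fin d → Fin d} {C T : Finset (Fin d)} (hTC : T ⊆ C)
    (hτ : ∀ y ∉ C, τ y = y) {I K : {s : Finset (Fin d) // s.card = r}} (hIC : Disjoint I.1 C)
    (u : KK Fq) :
    compound Fq (1 + graphMatrix Fq τ T u) r I K =
      (if K.1 ∩ C ⊆ T then u ^ (K.1 ∩ C).card else 0) *
        compound Fq (funMatrix Fq τ) r I K := by
  rw [compound_eq_prod_mul_of_col (c := fun y => if y ∈ T then u else if y ∈ C then 0 else 1)]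
  · congr 1
    split_ifs with hKT
    · calc ∏ y ∈ K.1, (if y ∈ T then u else if y ∈ C then 0 else 1)
          = ∏ y ∈ K.1, (if y ∈ C then u else 1) := prod_congr rfl fun y hy => by
            by_cases hyC : y ∈ C
            · simp [hyC, hKT (mem_inter.2 ⟨hy, hyC⟩)]
            · have hyT : y ∉ T := fun hyT => hyC (hTC hyT)
              simp [hyC, hyT]
        _ = u ^ (K.1 ∩ C).card := by rw [prod_ite_mem, prod_const]
    · obtain ⟨y, hy, hyT⟩ := not_subset.1 hKT
      exact prod_eq_zero (mem_inter.1 hy).1 (by simp [hyT, (mem_inter.1 hy).2])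
  · intro x hx y _
    have hxy (hy : y ∈ C) : x ≠ y := fun h => disjoint_left.1 hIC hx (h ▸ hy)
    simp only [Matrix.add_apply, graphMatrix, Matrix.of_apply, funMatrix, Matrix.submatrix_apply,
      id, Matrix.one_apply]
    by_cases hyT : y ∈ T
    · simp [hyT, hxy (hTC hyT)]
    by_cases hyC : y ∈ C
    · simp [hyT, hyC, hxy hyC]
    · simp [hyT, hyC, hτ y hyC]

lemma sum_powerset_neg_one_pow_mul_compound_mulVec (w : Fin d → KK Fq) {τ : Fin d → Fin d}
    {I J : {s : Finset (Fin d) // s.card = r}} (hτJ : (J.1 \ I.1).image τ = I.1 \ J.1)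
    (hτ : ∀ y ∉ J.1 \ I.1, τ y = y) (u : KK Fq)
    (v : {s : Finset (Fin d) // s.card = r} → KK Fq) :
    ∑ T ∈ (J.1 \ I.1).powerset, (-1) ^ T.card *
        (compound Fq (Matrix.diagonal w * (1 + graphMatrix Fq τ T u)) r *ᵥ v) I =
      (-1) ^ (J.1 \ I.1).card * ((∏ x ∈ I.1, w x) * u ^ (J.1 \ I.1).card *
        compound Fq (funMatrix Fq τ) r I J * v J) := by
  set C := J.1 \ I.1
  set g : {s : Finset (Fin d) // s.card = r} → KK Fq :=
    fun K => (∏ x ∈ I.1, w x) * u ^ (K.1 ∩ C).card *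
      compound Fq (funMatrix Fq τ) r I K * v K
  have hcoord (T : Finset (Fin d)) (hT : T ∈ C.powerset) :
      (compound Fq (Matrix.diagonal w * (1 + graphMatrix Fq τ T u)) r *ᵥ v) I =
        ∑ K, if K.1 ∩ C ⊆ T then g K else 0 := by
    change ∑ K, _ * v K = _
    refine sum_congr rfl fun K _ => ?_
    rw [compound_diagonal_mul, compound_one_add_graphMatrix Fq (mem_powerset.1 hT) hτ
      disjoint_sdiff]
    simp only [g]
    split_ifs <;> ring
  calc ∑ T ∈ C.powerset, (-1) ^ T.card *
        (compound Fq (Matrix.diagonal w * (1 + graphMatrix Fq τ T u)) r *ᵥ v) I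
      = ∑ K, (∑ T ∈ C.powerset with K.1 ∩ C ⊆ T, (-1) ^ T.card) * g K := by
        rw [sum_congr rfl fun T hT => by rw [hcoord T hT, mul_sum], sum_comm]
        simp only [sum_filter, sum_mul, mul_ite, ite_mul, mul_zero, zero_mul]
    _ = ∑ K, (if K.1 ∩ C = C then (-1) ^ C.card else 0) * g K := by
        simp only [sum_powerset_neg_one_pow_card_of_subset inter_subset_right]
    _ = (-1) ^ C.card * g J := by
        rw [sum_eq_single J, if_pos (inter_eq_right.2 sdiff_subset)]
        · intro K _ hKJ
          by_cases hCK : K.1 ∩ C = C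
          · have hP : compound Fq (funMatrix Fq τ) r I K = 0 :=
              compound_funMatrix_eq_zero Fq fun hK => hKJ <| Subtype.ext <|
                eq_of_image_eq_of_sdiff_subset hτJ hτ (K.2.trans I.2.symm)
                (inter_eq_right.1 hCK) (J.2.trans K.2.symm).le hK
            simp [g, hP]
          · simp [hCK]
        · exact fun h => absurd (mem_univ J) h
    _ = _ := by
        simp only [g]
        rw [show J.1 ∩ C = C from inter_eq_right.2 sdiff_subset]

lemma exists_subset_le_absK_compound_mulVec (w : Fin d → KK Fq) {τ : Fin d → Fin d}
    {I J : {s : Finset (Fin d) // s.card = r}} (hτJ : (J.1 \ I.1).image τ = I.1 \ J.1)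
    (hτ : ∀ y ∉ J.1 \ I.1, τ y = y) (u : KK Fq)
    (v : {s : Finset (Fin d) // s.card = r} → KK Fq) :
    ∃ T ⊆ J.1 \ I.1,
      absK Fq (∏ x ∈ I.1, w x) * absK Fq u ^ (J.1 \ I.1).card * absK Fq (v J) ≤
      absK Fq ((compound Fq (Matrix.diagonal w * (1 + graphMatrix Fq τ T u)) r *ᵥ v) I) := by
  obtain ⟨T, hT, hle⟩ := (isNonarchimedean_absK Fq).finset_image_add_of_nonempty
    (fun T => (-1) ^ T.card *
      (compound Fq (Matrix.diagonal w * (1 + graphMatrix Fq τ T u)) r *ᵥ v) I)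
    (powerset_nonempty (J.1 \ I.1))
  rw [sum_powerset_neg_one_pow_mul_compound_mulVec Fq w hτJ hτ u v] at hle
  simp only [absK_mul, absK_pow, absK_neg_one, one_pow, one_mul,
    absK_compound_funMatrix Fq (image_eq_of_image_sdiff hτJ hτ), mul_one] at hle
  exact ⟨T, mem_powerset.1 hT, hle⟩

end Compound

section Blocks

variable {m n : ℕ}

lemma coe_uA_eq_one_add {N : Matrix (Fin (m + n)) (Fin (m + n)) (KK Fq)}
    (hN : ∀ x y, N x y ≠ 0 → (x : ℕ) < m ∧ m ≤ (y : ℕ)) :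
    (uA Fq (fun i j => N (Fin.castAdd n i) (Fin.natAdd m j)) :
      Matrix (Fin (m + n)) (Fin (m + n)) (KK Fq)) = 1 + N := by
  have hN' (x y : Fin (m + n)) (h : ¬((x : ℕ) < m ∧ m ≤ (y : ℕ))) : N x y = 0 :=
    not_not.1 (mt (hN x y) h)
  refine Matrix.ext fun x y => ?_
  induction x using Fin.addCases <;> induction y using Fin.addCases <;>
    simp [uA, Matrix.one_apply, hN', Fin.ext_iff] <;> omega

lemma wtVec_apply (a : Fin (m + n) → ℕ) (x : Fin (m + n)) :
    wtVec m n a x = if (x : ℕ) < m then (a x : ℤ) else -(a x : ℤ) := by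
  induction x using Fin.addCases <;> simp [wtVec]

def firstBlock (m n : ℕ) : Finset (Fin (m + n)) := {x | (x : ℕ) < m}

lemma sum_firstBlock {M : Type*} [AddCommMonoid M] (f : Fin (m + n) → M) :
    ∑ x ∈ firstBlock m n, f x = ∑ i : Fin m, f (Fin.castAdd n i) := by
  simp [firstBlock, sum_filter, Fin.sum_univ_add]

lemma sum_compl_firstBlock {M : Type*} [AddCommMonoid M] (f : Fin (m + n) → M) :
    ∑ x ∈ (firstBlock m n)ᶜ, f x = ∑ j : Fin n, f (Fin.natAdd m j) := by
  have (i : Fin m) : ¬m ≤ (i : ℕ) := not_le.2 i.is_lt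
  simp [firstBlock, compl_filter, sum_filter, Fin.sum_univ_add, this]

lemma sum_wtVec (a : Fin (m + n) → ℕ) (I : Finset (Fin (m + n))) :
    ∑ x ∈ I, wtVec m n a x =
      ∑ x ∈ I ∩ firstBlock m n, (a x : ℤ) - ∑ x ∈ I \ firstBlock m n, (a x : ℤ) := by
  rw [← sum_inter_add_sum_sdiff I (firstBlock m n), sub_eq_add_neg, ← sum_neg_distrib]
  congr 1 <;> refine sum_congr rfl fun x hx => ?_ <;>
    simp only [mem_inter, Finset.mem_sdiff, firstBlock, mem_filter,
      mem_univ, true_and] at hx <;>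
    simp [wtVec_apply, hx]

lemma minWt_le {k : ℕ} (a : Fin k → ℕ) (i : Fin k) : minWt a ≤ a i :=
  ciInf_le (OrderBot.bddBelow _) i

lemma exists_minWt_le_sum_wtVec (a : Fin (m + n) → ℕ)
    (hsum : ∑ i : Fin m, a (Fin.castAdd n i) = ∑ j : Fin n, a (Fin.natAdd m j))
    (J : Finset (Fin (m + n))) (hJ0 : 0 < J.card) (hJ : J.card < m + n) :
    ∃ I : Finset (Fin (m + n)), I.card = J.card ∧ J ∩ firstBlock m n ⊆ I ∧
      I \ firstBlock m n ⊆ J ∧ (minWt a : ℤ) ≤ ∑ x ∈ I, wtVec m n a x := by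
  obtain ⟨I, hI, hJI, hIJ, hwt⟩ := exists_card_eq_weight_ge (firstBlock m n) a (minWt a)
    (minWt_le a) (by rw [sum_firstBlock, sum_compl_firstBlock, hsum]) J hJ0 (by simpa using hJ)
  refine ⟨I, hI, hJI, hIJ, ?_⟩
  rw [sum_wtVec]
  have := (Nat.cast_le (α := ℤ)).2 hwt
  push_cast at this
  linarith

lemma exists_uA_le_absK_compound_mulVec {r : ℕ} (a : Fin (m + n) → ℕ)
    (hsum : ∑ i : Fin m, a (Fin.castAdd n i) = ∑ j : Fin n, a (Fin.natAdd m j))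
    {I J : {s : Finset (Fin (m + n)) // s.card = r}} (hJI : J.1 ∩ firstBlock m n ⊆ I.1)
    (hIJ : I.1 \ firstBlock m n ⊆ J.1) (u : KK Fq)
    (v : {s : Finset (Fin (m + n)) // s.card = r} → KK Fq) :
    ∃ A : Fin m → Fin n → KK Fq, (∀ i j, absK Fq (A i j) ≤ absK Fq u) ∧
      (Fintype.card Fq : ℝ) ^ (∑ x ∈ I.1, wtVec m n a x) * absK Fq u ^ (J.1 \ I.1).card *
          absK Fq (v J) ≤
        absK Fq ((compound Fq ((ga Fq a hsum * uA Fq A : G Fq (m + n)) :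
          Matrix (Fin (m + n)) (Fin (m + n)) (KK Fq)) r *ᵥ v) I) := by
  obtain ⟨τ, hτJ, hτ⟩ := exists_image_eq_of_card_eq (card_sdiff_comm (J.2.trans I.2.symm))
  obtain ⟨T, hT, hle⟩ := exists_subset_le_absK_compound_mulVec Fq
    (fun x => tElem Fq ^ wtVec m n a x) hτJ hτ u v
  have hsupp (x y : Fin (m + n)) (hxy : graphMatrix Fq τ T u x y ≠ 0) :
      (x : ℕ) < m ∧ m ≤ (y : ℕ) := by
    obtain ⟨hyT, rfl⟩ : y ∈ T ∧ x = τ y := by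
      by_contra h
      exact hxy (if_neg h)
    have hy : y ∈ J.1 \ I.1 := hT hyT
    have hτy : τ y ∈ I.1 \ J.1 := hτJ ▸ mem_image_of_mem τ hy
    rw [Finset.mem_sdiff] at hy hτy
    constructor
    · by_contra h
      exact hτy.2 (hIJ (Finset.mem_sdiff.2 ⟨hτy.1, by simpa [firstBlock] using h⟩))
    · by_contra h
      exact hy.2 (hJI (mem_inter.2 ⟨hy.1, by simpa [firstBlock] using h⟩))
  refine ⟨fun i j => graphMatrix Fq τ T u (Fin.castAdd n i) (Fin.natAdd m j),
    fun i j => ?_, ?_⟩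
  · simp only [graphMatrix, Matrix.of_apply]
    split_ifs
    exacts [le_rfl, absK_zero Fq ▸ absK_nonneg Fq u]
  · have hga : (ga Fq a hsum : Matrix (Fin (m + n)) (Fin (m + n)) (KK Fq)) =
        Matrix.diagonal fun x => tElem Fq ^ wtVec m n a x := rfl
    rw [Matrix.SpecialLinearGroup.coe_mul, hga, coe_uA_eq_one_add Fq hsupp]
    rwa [prod_zpow_eq Fq _ (tElem_ne_zero Fq), absK_zpow, absK_tElem] at hle

end Blocks

lemma absK_le_extNorm {d r : ℕ} (v : {s : Finset (Fin d) // s.card = r} → KK Fq)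
    (I : {s : Finset (Fin d) // s.card = r}) : absK Fq (v I) ≤ extNorm Fq v :=
  le_ciSup (f := fun I => absK Fq (v I)) (Set.finite_range _).bddAbove I

lemma exists_extNorm_le_absK {d r : ℕ} (hr : r ≤ d)
    (v : {s : Finset (Fin d) // s.card = r} → KK Fq) : ∃ J, extNorm Fq v ≤ absK Fq (v J) := by
  obtain ⟨J₀, -, hJ₀⟩ := exists_subset_card_eq (s := (Finset.univ : Finset (Fin d)))
    (by simpa using hr)
  have : Nonempty {s : Finset (Fin d) // s.card = r} := ⟨⟨J₀, hJ₀⟩⟩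
  obtain ⟨J, hJ⟩ := Finite.exists_max fun J => absK Fq (v J)
  exact ⟨J, ciSup_le hJ⟩

lemma normInfMat_le {m n : ℕ} {A : Fin m → Fin n → KK Fq} {c : ℝ} (hc : 0 ≤ c)
    (h : ∀ i j, absK Fq (A i j) ≤ c) : normInfMat Fq A ≤ c :=
  Real.iSup_le (fun i => Real.iSup_le (h i) hc) hc

lemma exists_absK_pos_lt {ρ : ℝ} (hρ : 0 < ρ) :
    ∃ u : KK Fq, 0 < absK Fq u ∧ absK Fq u ≤ 1 ∧ absK Fq u < ρ := by
  have hq := one_lt_card_real Fq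
  obtain ⟨k, hk⟩ := exists_pow_lt_of_lt_one hρ (inv_lt_one_of_one_lt₀ hq)
  refine ⟨tElem Fq ^ (-(k : ℤ)), ?_⟩
  rw [absK_zpow, absK_tElem, _root_.zpow_neg, zpow_natCast, ← inv_pow]
  exact ⟨by positivity, pow_le_one₀ (by positivity) (inv_le_one_of_one_le₀ hq.le), hk⟩

theorem sup_extPower_lower_bound_general
    (Fq : Type) [Field Fq] [Fintype Fq] (m n : ℕ)
    :
    ∃ β : ℝ, 0 < β ∧ ∀ ρ : ℝ, 0 < ρ → ∃ b : ℝ, 0 < b ∧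
      ∀ r : ℕ, 1 ≤ r → r ≤ m + n - 1 →
      ∀ v : {s : Finset (Fin (m + n)) // s.card = r} → KK Fq,
      ∀ (a : Fin (m + n) → ℕ), (∀ i, 0 < a i) →
      ∀ (hsum : ∑ i : Fin m, a (Fin.castAdd n i) = ∑ j : Fin n, a (Fin.natAdd m j)),
      ∃ A : Fin m → Fin n → KK Fq, A ∈ ballMat Fq m n ρ ∧
        b * (Fintype.card Fq : ℝ) ^ (β * (minWt a : ℝ)) * extNorm Fq v ≤
          extNorm Fq ((compound Fq
              (((ga Fq a hsum) * uA Fq A : G Fq (m + n)) :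
                Matrix (Fin (m + n)) (Fin (m + n)) (KK Fq)) r).mulVec v) := by
  refine ⟨1, one_pos, fun ρ hρ => ?_⟩
  obtain ⟨u, hu0, hu1, huρ⟩ := exists_absK_pos_lt Fq hρ
  refine ⟨absK Fq u ^ (m + n), pow_pos hu0 _, fun r hr1 hr2 v a _ hsum => ?_⟩
  obtain ⟨J, hJ⟩ := exists_extNorm_le_absK Fq (by omega : r ≤ m + n) v
  obtain ⟨I, hIcard, hJI, hIJ, hwt⟩ :=
    exists_minWt_le_sum_wtVec a hsum J.1 (by rw [J.2]; omega) (by rw [J.2]; omega)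
  obtain ⟨A, hA, hAv⟩ :=
    exists_uA_le_absK_compound_mulVec Fq a hsum (I := ⟨I, hIcard.trans J.2⟩) hJI hIJ u v
  refine ⟨A, (normInfMat_le Fq hu0.le hA).trans_lt huρ, ?_⟩
  have hq : (1 : ℝ) ≤ Fintype.card Fq := (one_lt_card_real Fq).le
  have hmin : (Fintype.card Fq : ℝ) ^ (1 * (minWt a : ℝ)) ≤
      (Fintype.card Fq : ℝ) ^ (∑ x ∈ I, wtVec m n a x) := by
    rw [one_mul, Real.rpow_natCast, ← zpow_natCast]
    exact zpow_le_zpow_right₀ hq hwt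
  have hpow : absK Fq u ^ (m + n) ≤ absK Fq u ^ (J.1 \ I).card :=
    pow_le_pow_of_le_one hu0.le hu1 ((card_le_univ _).trans_eq (Fintype.card_fin _))
  calc absK Fq u ^ (m + n) * (Fintype.card Fq : ℝ) ^ (1 * (minWt a : ℝ)) * extNorm Fq v
      ≤ absK Fq u ^ (J.1 \ I).card * (Fintype.card Fq : ℝ) ^ (∑ x ∈ I, wtVec m n a x) *
          absK Fq (v J) :=
        mul_le_mul (mul_le_mul hpow hmin (by positivity) (pow_pos hu0 _).le) hJ
          ((absK_nonneg Fq _).trans (absK_le_extNorm Fq v J))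
          (mul_pos (pow_pos hu0 _) (by positivity)).le
    _ = _ := by ring
    _ ≤ _ := hAv
    _ ≤ _ := absK_le_extNorm Fq _ _

/-- Lemma 2.4: there exists `β > 0` such that for every open
`‖·‖_∞`-ball `B` centered at `0` in `Mat_{m×n}(K)` there is `b > 0` such that for each
`r = 1,…,d−1`, every `v ∈ ⋀^r K^d` and every `a ∈ 𝔞⁺`,
`sup_{A ∈ B} ‖σ(g_a u_A) v‖_∞ ≥ b·q^{β·min(a)}·‖v‖_∞`. -/
theorem sup_extPower_lower_bound
    (Fq : Type) [Field Fq] [Fintype Fq] (m n : ℕ) (hm : 0 < m) (hn : 0 < n)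
    :
    ∃ β : ℝ, 0 < β ∧ ∀ ρ : ℝ, 0 < ρ → ∃ b : ℝ, 0 < b ∧
      ∀ r : ℕ, 1 ≤ r → r ≤ m + n - 1 →
      ∀ v : {s : Finset (Fin (m + n)) // s.card = r} → KK Fq,
      ∀ (a : Fin (m + n) → ℕ), (∀ i, 0 < a i) →
      ∀ (hsum : ∑ i : Fin m, a (Fin.castAdd n i) = ∑ j : Fin n, a (Fin.natAdd m j)),
      ∃ A : Fin m → Fin n → KK Fq, A ∈ ballMat Fq m n ρ ∧
        b * (Fintype.card Fq : ℝ) ^ (β * (minWt a : ℝ)) * extNorm Fq v ≤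
          extNorm Fq ((compound Fq
              (((ga Fq a hsum) * uA Fq A : G Fq (m + n)) :
                Matrix (Fin (m + n)) (Fin (m + n)) (KK Fq)) r).mulVec v) :=
  sup_extPower_lower_bound_general Fq m n

end PaperKL
end
end

section
/- Let (Y,ν) be a probability space, q > 1, C > 0, δ > 0, and let F: Y × ℤ_{≥0} → ℝ be measurable with F(·,i) ∈ L²(ν) for each i, satisfying |∫_Y F(y,i)F(y,j) dν(y)| ≤ C·q^{−δ·min(i, j−i)} for all integers 0 ≤ i ≤ j. Then for all integers 0 ≤ b ≤ c: ∫_Y (Σ_{i=b}^{c−1} F(y,i))² dν(y) ≤ 4C(c−b)/(1−q^{−δ}). -/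
/-!
Expanding the square writes `∫ (∑_{i ∈ [b,c)} F_i)²` as the sum of the correlations `∫ F_i F_j`.
With `r = q^{-δ} < 1`, the correlation of `F_i` and `F_j` (`i ≤ j`) is at most
`C r^{min(i, j-i)} ≤ C (r^i + r^{j-i})`, so for each fixed `j` the correlations with the earlier
indices sum to at most twice a geometric series, `2C/(1-r)`. Symmetry accounts for the pairs with
`i > j`, which gives the factor `4C` per index.
-/

open MeasureTheory Finset

lemma pow_min_le_add_pow {r : ℝ} (hr : 0 ≤ r) (m n : ℕ) : r ^ min m n ≤ r ^ m + r ^ n := by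
  rcases min_choice m n with h | h <;> rw [h]
  · exact le_add_of_nonneg_right (pow_nonneg hr n)
  · exact le_add_of_nonneg_left (pow_nonneg hr m)

lemma sum_range_pow_min_sub_le {r : ℝ} (hr0 : 0 ≤ r) (hr1 : r < 1) (j : ℕ) :
    ∑ i ∈ range (j + 1), r ^ min i (j - i) ≤ 2 / (1 - r) := by
  have hgeom : ∑ i ∈ range (j + 1), r ^ i ≤ 1 / (1 - r) := by
    have h := geom_sum_Ico_le_of_lt_one (m := 0) (n := j + 1) hr0 hr1
    rwa [← range_eq_Ico, pow_zero] at h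
  have hreflect : ∑ i ∈ range (j + 1), r ^ (j - i) = ∑ i ∈ range (j + 1), r ^ i := by
    simpa using sum_range_reflect (fun i => r ^ i) (j + 1)
  calc ∑ i ∈ range (j + 1), r ^ min i (j - i)
      ≤ ∑ i ∈ range (j + 1), (r ^ i + r ^ (j - i)) :=
        sum_le_sum fun i _ => pow_min_le_add_pow hr0 i (j - i)
    _ = 2 * ∑ i ∈ range (j + 1), r ^ i := by rw [sum_add_distrib, hreflect, two_mul]
    _ ≤ 2 / (1 - r) := by rw [div_eq_mul_one_div 2]; gcongr

lemma sum_sum_le_of_le_pow_min {a : ℕ → ℕ → ℝ} {C r : ℝ} (hC : 0 ≤ C) (hr0 : 0 ≤ r) (hr1 : r < 1)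
    (hsymm : ∀ i j, a i j = a j i) (hle : ∀ i j, i ≤ j → a i j ≤ C * r ^ min i (j - i))
    (s : Finset ℕ) :
    ∑ i ∈ s, ∑ j ∈ s, a i j ≤ 4 * C * #s / (1 - r) := by
  set w : ℕ → ℕ → ℝ := fun i j => if i ≤ j then C * r ^ min i (j - i) else 0
  have hw0 : ∀ i j, 0 ≤ w i j := fun i j => by unfold w; split_ifs <;> positivity
  have ha : ∀ i j, a i j ≤ w i j + w j i := fun i j => by
    rcases le_total i j with h | h
    · have : a i j ≤ w i j := by simpa [w, h] using hle i j h
      linarith [hw0 j i]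
    · have : a i j ≤ w j i := by simpa [w, h, hsymm i j] using hle j i h
      linarith [hw0 i j]
  have hcolumn : ∀ j, ∑ i ∈ s, w i j ≤ 2 * C / (1 - r) := fun j => calc
    ∑ i ∈ s, w i j = ∑ i ∈ s with i ≤ j, w i j :=
        (sum_filter_of_ne fun i _ hi => by_contra fun h => hi (if_neg h)).symm
    _ ≤ ∑ i ∈ range (j + 1), w i j :=
        sum_le_sum_of_subset_of_nonneg (fun i hi => mem_range_succ_iff.2 (mem_filter.1 hi).2)
          fun i _ _ => hw0 i j
    _ = C * ∑ i ∈ range (j + 1), r ^ min i (j - i) := by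
        rw [mul_sum]
        exact sum_congr rfl fun i hi => if_pos (mem_range_succ_iff.1 hi)
    _ ≤ C * (2 / (1 - r)) := by gcongr; exact sum_range_pow_min_sub_le hr0 hr1 j
    _ = 2 * C / (1 - r) := by ring
  calc ∑ i ∈ s, ∑ j ∈ s, a i j
      ≤ ∑ i ∈ s, ∑ j ∈ s, (w i j + w j i) := sum_le_sum fun i _ => sum_le_sum fun j _ => ha i j
    _ = 2 * ∑ j ∈ s, ∑ i ∈ s, w i j := by
        simp only [sum_add_distrib]
        rw [sum_comm (f := fun i j => w i j), two_mul]
    _ ≤ 2 * ∑ _j ∈ s, 2 * C / (1 - r) := by gcongr with j; exact hcolumn j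
    _ = 4 * C * #s / (1 - r) := by rw [sum_const, nsmul_eq_mul]; ring

lemma integral_sq_sum_eq_sum_sum_integral_mul {Y ι : Type*} [MeasurableSpace Y] {ν : Measure Y}
    {f : ι → Y → ℝ} (hf : ∀ i, MemLp (f i) 2 ν) (s : Finset ι) :
    ∫ y, (∑ i ∈ s, f i y) ^ 2 ∂ν = ∑ i ∈ s, ∑ j ∈ s, ∫ y, f i y * f j y ∂ν := by
  have hint : ∀ i j, Integrable (fun y => f i y * f j y) ν := fun i j =>
    (hf i).integrable_mul (hf j)
  simp_rw [sq, sum_mul_sum]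
  rw [integral_finsetSum _ fun i _ => integrable_finsetSum _ fun j _ => hint i j]
  exact sum_congr rfl fun i _ => integral_finsetSum _ fun j _ => hint i j

theorem integral_sq_sum_le_of_correlation_bound_general
    {Y : Type*} [MeasurableSpace Y] (ν : Measure Y)
    (q C δ : ℝ) (hq : 1 < q) (hC : 0 < C) (hδ : 0 < δ)
    (F : Y → ℕ → ℝ)
    (hFL2 : ∀ i : ℕ, MemLp (fun y => F y i) 2 ν)
    (hcorr : ∀ i j : ℕ, i ≤ j →
      |∫ y, F y i * F y j ∂ν| ≤ C * q ^ (-(δ * ((min i (j - i) : ℕ) : ℝ))))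
    (b c : ℕ) (hbc : b ≤ c) :
    ∫ y, (∑ i ∈ Finset.Ico b c, F y i) ^ 2 ∂ν
      ≤ 4 * C * ((c : ℝ) - (b : ℝ)) / (1 - q ^ (-δ)) := by
  have hr0 : 0 ≤ q ^ (-δ) := Real.rpow_nonneg (by linarith) _
  have hr1 : q ^ (-δ) < 1 := Real.rpow_lt_one_of_one_lt_of_neg hq (neg_neg_of_pos hδ)
  have hle : ∀ i j, i ≤ j →
      ∫ y, F y i * F y j ∂ν ≤ C * (q ^ (-δ)) ^ min i (j - i) := fun i j hij => by
    rw [← Real.rpow_mul_natCast (by linarith), neg_mul]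
    exact (le_abs_self _).trans (hcorr i j hij)
  have hsymm : ∀ i j, ∫ y, F y i * F y j ∂ν = ∫ y, F y j * F y i ∂ν := fun i j => by
    simp_rw [mul_comm]
  rw [integral_sq_sum_eq_sum_sum_integral_mul (f := fun i y => F y i) hFL2,
    ← Nat.cast_sub hbc, ← Nat.card_Ico]
  exact sum_sum_le_of_le_pow_min hC.le hr0 hr1 hsymm hle _

/-- Lemma 3.6, Kleinbock–Shi–Weiss: if `(Y,ν)` is a probability space and
`F : Y × ℤ_{≥0} → ℝ` satisfies `|∫_Y F(y,i)F(y,j) dν| ≤ C·q^{−δ·min(i,j−i)}` for all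
`0 ≤ i ≤ j`, then for all `0 ≤ b ≤ c`:
`∫_Y (Σ_{i=b}^{c−1} F(y,i))² dν ≤ 4C(c−b)/(1−q^{−δ})`. -/
theorem integral_sq_sum_le_of_correlation_bound
    {Y : Type*} [MeasurableSpace Y] (ν : Measure Y) [IsProbabilityMeasure ν]
    (q C δ : ℝ) (hq : 1 < q) (hC : 0 < C) (hδ : 0 < δ)
    (F : Y → ℕ → ℝ) (hFmeas : ∀ i : ℕ, Measurable fun y => F y i)
    (hFL2 : ∀ i : ℕ, MemLp (fun y => F y i) 2 ν)
    (hcorr : ∀ i j : ℕ, i ≤ j →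
      |∫ y, F y i * F y j ∂ν| ≤ C * q ^ (-(δ * ((min i (j - i) : ℕ) : ℝ))))
    (b c : ℕ) (hbc : b ≤ c) :
    ∫ y, (∑ i ∈ Finset.Ico b c, F y i) ^ 2 ∂ν
      ≤ 4 * C * ((c : ℝ) - (b : ℝ)) / (1 - q ^ (-δ)) :=
  integral_sq_sum_le_of_correlation_bound_general ν q C δ hq hC hδ F hFL2 hcorr b c hbc
end
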